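/- arXiv:2305.12883 — 4 statements merged into one kernel-verified Lean document; each statement's English description precedes it below -/
import Mathlib

section
/- Let n, p be positive integers, let (Ω₀, μ) be a probability space, and let X : Ω₀ → Matrix (Fin n) (Fin p) ℝ be a measurable random matrix that is left-spherical, i.e. for every orthogonal matrix O ∈ O(n) the law of ω ↦ O * X(ω) equals the law of X. Assume that for μ-almost every ω the matrix X(ω) * X(ω)ᵀ is invertible, and let G(ω) := X(ω)ᵀ * (X(ω) * X(ω)ᵀ)⁻¹ (the Moore–Penrose inverse of X(ω)). Let Σ be a p×p real positive semidefinite symmetric matrix and Ω an n×n real positive semidefinite symmetric matrix, and assume the functions ω ↦ trace(G(ω) * Ω * G(ω)ᵀ * Σ) and ω ↦ trace(G(ω) * G(ω)ᵀ * Σ) are integrable. Then ∫ trace(G(ω) * Ω * G(ω)ᵀ * Σ) dμ(ω) = (trace(Ω) / n) · ∫ trace(G(ω) * G(ω)ᵀ * Σ) dμ(ω). -/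
open MeasureTheory Matrix


/-- Matrices inherit the product measurable structure of `m → n → α`. -/
instance matrixMeasurableSpace {m n α : Type*} [MeasurableSpace α] :
    MeasurableSpace (Matrix m n α) :=
  inferInstanceAs (MeasurableSpace (m → n → α))

instance matrixBorelSpace {m n : Type*} [Countable m] [Countable n] :
    BorelSpace (Matrix m n ℝ) :=
  inferInstanceAs (BorelSpace (m → n → ℝ))

namespace Thm32Aux

lemma measurable_entry {m k : Type*} (i : m) (j : k) :
    Measurable fun A : Matrix m k ℝ => A i j :=
  (measurable_pi_apply j).comp (measurable_pi_apply i)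

lemma measurable_matrix_mul {α : Type*} [MeasurableSpace α] {m k l : Type*} [Fintype k]
    {f : α → Matrix m k ℝ} {g : α → Matrix k l ℝ}
    (hf : Measurable f) (hg : Measurable g) : Measurable fun a => f a * g a := by
  apply measurable_pi_lambda
  intro i
  apply measurable_pi_lambda
  intro j
  simp only [Matrix.mul_apply]
  exact Finset.measurable_sum _ fun c _ =>
    ((measurable_entry i c).comp hf).mul ((measurable_entry c j).comp hg)

lemma measurable_matrix_transpose {α : Type*} [MeasurableSpace α] {m k : Type*}
    {f : α → Matrix m k ℝ} (hf : Measurable f) : Measurable fun a => (f a)ᵀ :=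
  measurable_pi_lambda _ fun i => measurable_pi_lambda _ fun j =>
    (measurable_entry j i).comp hf

lemma measurable_matrix_inv {k : ℕ} :
    Measurable (fun A : Matrix (Fin k) (Fin k) ℝ => A⁻¹) := by
  have hdet : Measurable fun A : Matrix (Fin k) (Fin k) ℝ => A.det :=
    (continuous_id.matrix_det).measurable
  have hadj : Measurable fun A : Matrix (Fin k) (Fin k) ℝ => A.adjugate :=
    (continuous_id.matrix_adjugate).measurable
  have h : ∀ A : Matrix (Fin k) (Fin k) ℝ, A⁻¹ = Ring.inverse A.det • A.adjugate :=
    fun A => Matrix.inv_def A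
  simp only [h]
  apply measurable_pi_lambda
  intro i
  apply measurable_pi_lambda
  intro j
  have h2 : (fun A : Matrix (Fin k) (Fin k) ℝ => (Ring.inverse A.det • A.adjugate) i j)
      = fun A => (A.det)⁻¹ * A.adjugate i j := by
    funext A; simp [Ring.inverse_eq_inv']
  rw [h2]
  exact (hdet.inv).mul ((measurable_entry i j).comp hadj)

/-- Entry bound for real positive semidefinite matrices: every entry is bounded in
absolute value by the trace. -/
lemma abs_entry_le_trace {k : ℕ} {N : Matrix (Fin k) (Fin k) ℝ} (hN : N.PosSemidef)
    (i j : Fin k) : |N i j| ≤ N.trace := by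
  have hsymm : ∀ a b, N b a = N a b := by
    intro a b
    have := congr_fun (congr_fun hN.1 a) b
    simpa [Matrix.conjTranspose_apply] using this
  have hdiag : ∀ a, 0 ≤ N a a := by
    intro a
    have h := hN.dotProduct_mulVec_nonneg (Pi.single a (1:ℝ))
    have hstar : star (Pi.single a (1:ℝ)) = (Pi.single a (1:ℝ) : Fin k → ℝ) := by funext b; simp
    rw [hstar] at h
    simpa [dotProduct_single, Matrix.mulVec_single] using h
  have hdiag_le : ∀ a, N a a ≤ N.trace := by
    intro a
    exact Finset.single_le_sum (fun b _ => hdiag b) (Finset.mem_univ a)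
  by_cases hij : i = j
  · subst hij
    rw [abs_of_nonneg (hdiag i)]
    exact hdiag_le i
  · have hquad : ∀ c : ℝ, 0 ≤ N i i + c * N i j + c * N j i + c * c * N j j := by
      intro c
      have h := hN.dotProduct_mulVec_nonneg (Pi.single i (1:ℝ) + Pi.single j c : Fin k → ℝ)
      have hstar : star ((Pi.single i (1:ℝ) : Fin k → ℝ) + Pi.single j c) =
          (Pi.single i (1:ℝ) : Fin k → ℝ) + Pi.single j c := by
        funext a; simp
      rw [hstar] at h
      have hexp : dotProduct ((Pi.single i (1:ℝ) : Fin k → ℝ) + Pi.single j c)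
          (N *ᵥ ((Pi.single i (1:ℝ) : Fin k → ℝ) + Pi.single j c))
          = N i i + c * N i j + c * N j i + c * c * N j j := by
        rw [Matrix.mulVec_add, dotProduct_add, add_dotProduct,
          add_dotProduct]
        simp [Matrix.mulVec_single, single_dotProduct, dotProduct_single]
        ring
      rw [hexp] at h
      exact h
    have h1 := hquad 1
    have h2 := hquad (-1)
    rw [hsymm i j] at h1 h2
    have hij2 : N i i + N j j ≤ N.trace := by
      have : N i i + N j j = ∑ a ∈ ({i, j} : Finset (Fin k)), N a a := by
        rw [Finset.sum_pair hij]
      rw [this]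
      exact Finset.sum_le_sum_of_subset_of_nonneg (Finset.subset_univ _)
        (fun b _ _ => hdiag b)
    have habs : |N i j| ≤ (N i i + N j j) / 2 := by
      rw [abs_le]; constructor <;> nlinarith
    have : (N i i + N j j) / 2 ≤ N.trace := by nlinarith [hdiag i, hdiag j]
    linarith

end Thm32Aux

open Thm32Aux

/-- Theorem 3.2: the variance component of the prediction risk. Under left-sphericity of
the design matrix `X`, the expected `Σ`-weighted variance of the ridgeless estimator
factorizes as `(trace Ω / n) * E[trace ((XᵀX)† Σ)]`, where under a.e. full row rank
`G = Xᵀ(XXᵀ)⁻¹` is the Moore–Penrose inverse of `X` and `G Gᵀ = (XᵀX)†`. -/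
theorem expected_variance_prediction_risk
    (n p : ℕ) (hn : 0 < n) (hp : 0 < p)
    {Ω₀ : Type*} [MeasurableSpace Ω₀] (μ : Measure Ω₀) [IsProbabilityMeasure μ]
    (X : Ω₀ → Matrix (Fin n) (Fin p) ℝ) (hX : Measurable X)
    (hsph : ∀ O : Matrix (Fin n) (Fin n) ℝ, Oᵀ * O = 1 → O * Oᵀ = 1 →
      Measure.map (fun ω => O * X ω) μ = Measure.map X μ)
    (hinv : ∀ᵐ ω ∂μ, IsUnit (X ω * (X ω)ᵀ))
    (G : Ω₀ → Matrix (Fin p) (Fin n) ℝ)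
    (hG : ∀ ω, G ω = (X ω)ᵀ * (X ω * (X ω)ᵀ)⁻¹)
    (Sig : Matrix (Fin p) (Fin p) ℝ) (hSig : Sig.PosSemidef)
    (Ω : Matrix (Fin n) (Fin n) ℝ) (hΩ : Ω.PosSemidef)
    (hint1 : Integrable (fun ω => (G ω * Ω * (G ω)ᵀ * Sig).trace) μ)
    (hint2 : Integrable (fun ω => (G ω * (G ω)ᵀ * Sig).trace) μ) :
    ∫ ω, (G ω * Ω * (G ω)ᵀ * Sig).trace ∂μ
      = (Ω.trace / n) * ∫ ω, (G ω * (G ω)ᵀ * Sig).trace ∂μ := by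
  classical
  -- the Moore-Penrose inverse as a function of the matrix
  set g : Matrix (Fin n) (Fin p) ℝ → Matrix (Fin p) (Fin n) ℝ :=
    fun A => Aᵀ * (A * Aᵀ)⁻¹ with hg_def
  set f : Matrix (Fin n) (Fin p) ℝ → Matrix (Fin n) (Fin n) ℝ :=
    fun A => (g A)ᵀ * Sig * g A with hf_def
  set M : Ω₀ → Matrix (Fin n) (Fin n) ℝ := fun ω => f (X ω) with hM_def
  have hMG : ∀ ω, M ω = (G ω)ᵀ * Sig * G ω := by
    intro ω; simp only [hM_def, hf_def, hG ω, hg_def]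
  -- trace identities
  have key1 : ∀ ω, (G ω * Ω * (G ω)ᵀ * Sig).trace = (Ω * M ω).trace := by
    intro ω
    rw [hMG ω]
    rw [show G ω * Ω * (G ω)ᵀ * Sig = (G ω * Ω) * ((G ω)ᵀ * Sig) by
      simp only [Matrix.mul_assoc]]
    rw [Matrix.trace_mul_comm]
    rw [show (G ω)ᵀ * Sig * (G ω * Ω) = ((G ω)ᵀ * Sig * G ω) * Ω by
      simp only [Matrix.mul_assoc]]
    rw [Matrix.trace_mul_comm]
  have key2 : ∀ ω, (G ω * (G ω)ᵀ * Sig).trace = (M ω).trace := by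
    intro ω
    rw [hMG ω, Matrix.mul_assoc, Matrix.trace_mul_comm]
  -- positive semidefiniteness of M
  have hMpsd : ∀ ω, (M ω).PosSemidef := by
    intro ω
    have h := hSig.conjTranspose_mul_mul_same (B := g (X ω))
    have hct : (g (X ω))ᴴ = (g (X ω))ᵀ := by
      ext a b; simp [Matrix.conjTranspose_apply]
    rw [hct] at h
    exact h
  -- measurability
  have hfmeas : Measurable f := by
    have hgmeas : Measurable g := by
      apply measurable_matrix_mul (measurable_matrix_transpose measurable_id)
      exact measurable_matrix_inv.comp
        (measurable_matrix_mul measurable_id (measurable_matrix_transpose measurable_id))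
    exact measurable_matrix_mul
      (measurable_matrix_mul (measurable_matrix_transpose hgmeas) measurable_const) hgmeas
  have hMmeas : ∀ k l, Measurable fun ω => M ω k l :=
    fun k l => (measurable_entry k l).comp (hfmeas.comp hX)
  -- integrability of the trace of M, hence of every entry
  have hint2' : Integrable (fun ω => (M ω).trace) μ := by
    have : (fun ω => (G ω * (G ω)ᵀ * Sig).trace) = fun ω => (M ω).trace := funext key2
    rwa [this] at hint2
  have htrace_nonneg : ∀ ω, 0 ≤ (M ω).trace := by
    intro ω
    have := hMpsd ω
    exact Finset.sum_nonneg fun a _ => by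
      have h := this.dotProduct_mulVec_nonneg (Pi.single a (1:ℝ))
      have hstar : star (Pi.single a (1:ℝ) : Fin n → ℝ) = Pi.single a (1:ℝ) := by
        funext b; simp
      rw [hstar] at h
      simpa [dotProduct_single, Matrix.mulVec_single] using h
  have hMint : ∀ k l, Integrable (fun ω => M ω k l) μ := by
    intro k l
    refine hint2'.mono ((hMmeas k l).aestronglyMeasurable) ?_
    filter_upwards with ω
    rw [Real.norm_eq_abs, Real.norm_eq_abs, abs_of_nonneg (htrace_nonneg ω)]
    exact abs_entry_le_trace (hMpsd ω) k l
  -- the expectation matrix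
  set F : Matrix (Fin n) (Fin n) ℝ := Matrix.of fun k l => ∫ ω, M ω k l ∂μ with hF_def
  have hFapp : ∀ k l, F k l = ∫ ω, M ω k l ∂μ := fun k l => rfl
  -- conjugation passes through the expectation
  have hconj : ∀ (B C : Matrix (Fin n) (Fin n) ℝ) (i j : Fin n),
      ∫ ω, (B * M ω * C) i j ∂μ = (B * F * C) i j := by
    intro B C i j
    have e1 : ∀ ω, (B * M ω * C) i j = ∑ l, (∑ k, B i k * M ω k l) * C l j := by
      intro ω; simp [Matrix.mul_apply]
    simp only [e1]
    rw [integral_finset_sum _ (fun l _ =>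
      ((integrable_finset_sum _ fun k _ => (hMint k l).const_mul _).mul_const _))]
    have e2 : ∀ l, ∫ ω, (∑ k, B i k * M ω k l) * C l j ∂μ
        = (∑ k, B i k * F k l) * C l j := by
      intro l
      rw [integral_mul_const]
      congr 1
      rw [integral_finset_sum _ (fun k _ => (hMint k l).const_mul _)]
      exact Finset.sum_congr rfl fun k _ => integral_const_mul _ _
    simp only [e2]
    simp [Matrix.mul_apply]
  -- trace passes through the expectation
  have htr : ∀ B : Matrix (Fin n) (Fin n) ℝ,
      ∫ ω, (B * M ω).trace ∂μ = (B * F).trace := by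
    intro B
    have e1 : ∀ ω, (B * M ω).trace = ∑ i, ∑ k, B i k * M ω k i := by
      intro ω; simp [Matrix.trace, Matrix.mul_apply, Matrix.diag]
    simp only [e1]
    rw [integral_finset_sum _ (fun i _ =>
      integrable_finset_sum Finset.univ fun k _ => (hMint k i).const_mul (B i k))]
    have e2 : ∀ i, ∫ ω, ∑ k, B i k * M ω k i ∂μ = ∑ k, B i k * F k i := by
      intro i
      rw [integral_finset_sum _ (fun k _ => (hMint k i).const_mul _)]
      exact Finset.sum_congr rfl fun k _ => integral_const_mul _ _
    simp only [e2]
    simp [Matrix.trace, Matrix.mul_apply, Matrix.diag]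
  -- equivariance of f under left multiplication by orthogonal matrices
  have hfO : ∀ (O : Matrix (Fin n) (Fin n) ℝ), Oᵀ * O = 1 → O * Oᵀ = 1 →
      ∀ A, f (O * A) = O * f A * Oᵀ := by
    intro O hO1 hO2 A
    have hOt : (Oᵀ)⁻¹ = O := Matrix.inv_eq_right_inv hO1
    have hOinv : O⁻¹ = Oᵀ := Matrix.inv_eq_right_inv hO2
    have hgO : g (O * A) = g A * Oᵀ := by
      have h1 : (O * A) * (O * A)ᵀ = O * (A * Aᵀ) * Oᵀ := by
        rw [Matrix.transpose_mul]
        simp only [Matrix.mul_assoc]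
      have h2 : ((O * A) * (O * A)ᵀ)⁻¹ = O * ((A * Aᵀ)⁻¹ * Oᵀ) := by
        rw [h1, Matrix.mul_inv_rev, Matrix.mul_inv_rev, hOt, hOinv]
      show (O * A)ᵀ * ((O * A) * (O * A)ᵀ)⁻¹ = Aᵀ * (A * Aᵀ)⁻¹ * Oᵀ
      rw [h2, Matrix.transpose_mul]
      calc Aᵀ * Oᵀ * (O * ((A * Aᵀ)⁻¹ * Oᵀ))
          = Aᵀ * (Oᵀ * O) * ((A * Aᵀ)⁻¹ * Oᵀ) := by simp only [Matrix.mul_assoc]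
        _ = Aᵀ * (A * Aᵀ)⁻¹ * Oᵀ := by rw [hO1, Matrix.mul_one, Matrix.mul_assoc]
    simp only [hf_def, hgO, Matrix.transpose_mul, Matrix.transpose_transpose]
    simp only [Matrix.mul_assoc]
  -- invariance of F under orthogonal conjugation
  have horth : ∀ (O : Matrix (Fin n) (Fin n) ℝ), Oᵀ * O = 1 → O * Oᵀ = 1 →
      O * F * Oᵀ = F := by
    intro O hO1 hO2
    ext i j
    rw [← hconj O Oᵀ i j]
    have hrot : ∀ ω, O * M ω * Oᵀ = f (O * X ω) := by
      intro ω; rw [hfO O hO1 hO2 (X ω)]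
    simp only [hrot]
    have hOX : Measurable fun ω => O * X ω :=
      measurable_matrix_mul measurable_const hX
    have hm : Measurable fun A : Matrix (Fin n) (Fin p) ℝ => f A i j :=
      (measurable_entry i j).comp hfmeas
    calc ∫ ω, f (O * X ω) i j ∂μ
        = ∫ A, f A i j ∂(Measure.map (fun ω => O * X ω) μ) :=
          (integral_map hOX.aemeasurable hm.aestronglyMeasurable).symm
      _ = ∫ A, f A i j ∂(Measure.map X μ) := by rw [hsph O hO1 hO2]
      _ = ∫ ω, f (X ω) i j ∂μ := integral_map hX.aemeasurable hm.aestronglyMeasurable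
      _ = F i j := rfl
  -- F vanishes off the diagonal
  have hoffdiag : ∀ i j, i ≠ j → F i j = 0 := by
    intro i j hij
    set d : Fin n → ℝ := fun k => if k = i then -1 else 1 with hd_def
    have hdd : ∀ k, d k * d k = 1 := by
      intro k; by_cases h : k = i <;> simp [hd_def, h]
    have hDD : Matrix.diagonal d * Matrix.diagonal d = 1 := by
      rw [Matrix.diagonal_mul_diagonal]
      rw [show (fun k => d k * d k) = fun _ => (1:ℝ) from funext hdd]
      exact Matrix.diagonal_one
    have hDt : (Matrix.diagonal d)ᵀ = Matrix.diagonal d := Matrix.diagonal_transpose d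
    have h := horth (Matrix.diagonal d) (by rw [hDt]; exact hDD) (by rw [hDt]; exact hDD)
    have h2 := congr_fun (congr_fun h i) j
    rw [hDt] at h2
    rw [Matrix.mul_diagonal, Matrix.diagonal_mul] at h2
    have hdi : d i = -1 := by simp [hd_def]
    have hdj : d j = 1 := by simp [hd_def, Ne.symm hij]
    rw [hdi, hdj] at h2
    linarith
  -- the diagonal of F is constant
  have hdiageq : ∀ i j, F i i = F j j := by
    intro i j
    set P : Matrix (Fin n) (Fin n) ℝ := (Equiv.swap i j).toPEquiv.toMatrix with hP_def
    have hPt : Pᵀ = P := by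
      rw [hP_def, ← PEquiv.toMatrix_symm, ← Equiv.toPEquiv_symm, Equiv.symm_swap]
    have hPP : P * P = 1 := by
      rw [hP_def, ← PEquiv.toMatrix_trans, ← Equiv.toPEquiv_trans]
      simp [Equiv.swap_swap]
    have h := horth P (by rw [hPt]; exact hPP) (by rw [hPt]; exact hPP)
    rw [hPt] at h
    have h3 : (F.submatrix (Equiv.swap i j) id).submatrix id (Equiv.swap i j).symm = F := by
      rw [← PEquiv.mul_toMatrix_toPEquiv, ← PEquiv.toMatrix_toPEquiv_mul]
      exact h
    have h2 := congr_fun (congr_fun h3 i) i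
    simp only [Matrix.submatrix_apply, id_eq, Equiv.symm_swap, Equiv.swap_apply_left] at h2
    exact h2.symm
  -- F is a constant multiple of the identity
  set i0 : Fin n := ⟨0, hn⟩ with hi0
  set c : ℝ := F i0 i0 with hc
  have hFc : F = Matrix.diagonal (fun _ => c) := by
    ext a b
    by_cases hab : a = b
    · subst hab; rw [Matrix.diagonal_apply_eq]; exact hdiageq a i0
    · rw [Matrix.diagonal_apply_ne _ hab]; exact hoffdiag a b hab
  have hL : ∫ ω, (G ω * Ω * (G ω)ᵀ * Sig).trace ∂μ = Ω.trace * c := by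
    simp only [key1]
    rw [htr Ω, hFc]
    simp [Matrix.trace, Matrix.diag, Matrix.mul_diagonal, ← Finset.sum_mul]
  have hR : ∫ ω, (G ω * (G ω)ᵀ * Sig).trace ∂μ = n * c := by
    simp only [key2]
    have h1 := htr 1
    simp only [Matrix.one_mul] at h1
    rw [h1, hFc]
    simp [Matrix.trace_diagonal, Finset.sum_const, mul_comm]
  rw [hL, hR]
  have hn' : (n : ℝ) ≠ 0 := Nat.cast_ne_zero.mpr hn.ne'
  field_simp
end

section
/- Let n, p be positive integers, let (Ω₀, μ) be a probability space, and let X : Ω₀ → Matrix (Fin n) (Fin p) ℝ, ε : Ω₀ → (Fin n → ℝ), and β : Ω₀ → (Fin p → ℝ) be mutually independent measurable random elements, all square-integrable where needed below. Assume: (i) X is left-spherical, i.e. for every orthogonal O ∈ O(n) the law of ω ↦ O * X(ω) equals the law of X; (ii) for μ-almost every ω, X(ω) * X(ω)ᵀ is invertible; (iii) E[ε] = 0 and E[ε εᵀ] = Ω, an n×n positive semidefinite symmetric matrix; (iv) E[β βᵀ] = (r²/p) · I where r² := E[‖β‖²] < ∞. Define β̂ := G(X)·(X β + ε) with G(X)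 := Xᵀ(X Xᵀ)⁻¹, and assume ω ↦ ‖β̂(ω) − β(ω)‖² and ω ↦ trace((X(ω)X(ω)ᵀ)⁻¹) are integrable. Then E[‖β̂ − β‖²] = r² · (1 − n/p) + (trace(Ω)/n) · E_X[trace((X Xᵀ / n)⁻¹) / n]. -/
open MeasureTheory ProbabilityTheory Matrix

lemma measurable_det_comp {m : ℕ} {Ω : Type*} [MeasurableSpace Ω]
    (F : Ω → Matrix (Fin m) (Fin m) ℝ) (hF : ∀ a b, Measurable fun ω => F ω a b) :
    Measurable fun ω => (F ω).det := by
  simp_rw [Matrix.det_apply]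
  exact Finset.measurable_sum _ fun σ _ =>
    (Finset.measurable_prod _ fun i _ => hF (σ i) i).const_smul _

lemma measurable_inv_entry_comp {m : ℕ} {Ω : Type*} [MeasurableSpace Ω]
    (F : Ω → Matrix (Fin m) (Fin m) ℝ) (hF : ∀ a b, Measurable fun ω => F ω a b)
    (i j : Fin m) : Measurable fun ω => (F ω)⁻¹ i j := by
  simp_rw [Matrix.inv_def, Matrix.smul_apply, Matrix.adjugate_apply, smul_eq_mul,
    Ring.inverse_eq_inv']
  refine ((measurable_det_comp F hF).inv).mul (measurable_det_comp _ fun a b => ?_)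
  by_cases h : a = j <;> simp [Matrix.updateRow_apply, h, hF a b]

lemma quad_single {m : Type*} [Fintype m] [DecidableEq m] (M : Matrix m m ℝ) (a b : m) :
    (Pi.single a (1:ℝ)) ⬝ᵥ (M *ᵥ Pi.single b 1) = M a b := by
  simp [dotProduct, mulVec, Pi.single_apply, Finset.mul_sum]

lemma quad_tr_mul_self {m q : Type*} [Fintype m] [Fintype q] (B : Matrix q m ℝ) (x : m → ℝ) :
    x ⬝ᵥ ((Bᵀ * B) *ᵥ x) = (B *ᵥ x) ⬝ᵥ (B *ᵥ x) := by
  rw [← Matrix.mulVec_mulVec, Matrix.dotProduct_mulVec, Matrix.vecMul_transpose]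

lemma entry_abs_le_trace {m : Type*} [Fintype m] [DecidableEq m] {M : Matrix m m ℝ}
    (hsymm : Mᵀ = M) (hpos : ∀ x : m → ℝ, 0 ≤ x ⬝ᵥ (M *ᵥ x)) (j k : m) :
    |M j k| ≤ M.trace := by
  have hdiag : ∀ i, 0 ≤ M i i := fun i => by
    have := hpos (Pi.single i 1); rwa [quad_single] at this
  have htr : ∀ i, M i i ≤ M.trace := fun i => by
    unfold Matrix.trace
    exact Finset.single_le_sum (fun a _ => hdiag a) (Finset.mem_univ i)
  rcases eq_or_ne j k with rfl | hjk
  · rw [abs_of_nonneg (hdiag j)]; exact htr j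
  · have hsum : M j j + M k k ≤ M.trace := by
      unfold Matrix.trace
      have : ({j, k} : Finset m).sum (fun i => M i i) ≤ Finset.univ.sum (fun i => M i i) :=
        Finset.sum_le_sum_of_subset_of_nonneg (Finset.subset_univ _) fun i _ _ => hdiag i
      rwa [Finset.sum_pair hjk] at this
    have hMkj : M k j = M j k := by
      have := congrFun (congrFun hsymm j) k
      simpa [Matrix.transpose_apply] using this
    have h1 : 0 ≤ M j j + M k k + 2 * M j k := by
      have := hpos (Pi.single j 1 + Pi.single k 1)
      simp only [Matrix.mulVec_add, dotProduct_add, add_dotProduct,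
        quad_single] at this
      linarith [this]
    have h2 : 0 ≤ M j j + M k k - 2 * M j k := by
      have := hpos (Pi.single j 1 - Pi.single k 1)
      simp only [Matrix.mulVec_sub, dotProduct_sub, sub_dotProduct,
        quad_single] at this
      linarith [this]
    rw [abs_le]; constructor <;> nlinarith [hsum]

lemma dot_expand {m : Type*} [Fintype m] (M : Matrix m m ℝ) (x : m → ℝ) :
    x ⬝ᵥ (M *ᵥ x) = ∑ j, ∑ k, (x j * x k) * M j k := by
  simp only [dotProduct, mulVec, Finset.mul_sum]
  exact Finset.sum_congr rfl fun j _ => Finset.sum_congr rfl fun k _ => by ring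

lemma mulVec_dot {m q : Type*} [Fintype m] [Fintype q] (B : Matrix q m ℝ) (x : m → ℝ)
    (y : q → ℝ) : (B *ᵥ x) ⬝ᵥ y = x ⬝ᵥ (Bᵀ *ᵥ y) := by
  rw [Matrix.dotProduct_mulVec, Matrix.vecMul_transpose]

lemma measurable_matrix_mul {Ω : Type*} [MeasurableSpace Ω] {a b c : Type*}
    [Fintype b] {F : Ω → Matrix a b ℝ} {H : Ω → Matrix b c ℝ}
    (hF : ∀ i j, Measurable fun ω => F ω i j) (hH : ∀ i j, Measurable fun ω => H ω i j) :
    ∀ i j, Measurable fun ω => (F ω * H ω) i j := by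
  intro i j
  simp_rw [Matrix.mul_apply]
  exact Finset.measurable_sum _ fun d _ => (hF i d).mul (hH d j)

section PtWise
variable {n p : ℕ} (X : Matrix (Fin n) (Fin p) ℝ)

lemma XmulG (h : (X * Xᵀ) * (X * Xᵀ)⁻¹ = 1) : X * (Xᵀ * (X * Xᵀ)⁻¹) = 1 := by
  rw [← Matrix.mul_assoc]; exact h

lemma P_mul_G (h : (X * Xᵀ) * (X * Xᵀ)⁻¹ = 1) :
    (Xᵀ * (X * Xᵀ)⁻¹ * X) * (Xᵀ * (X * Xᵀ)⁻¹) = Xᵀ * (X * Xᵀ)⁻¹ := by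
  rw [Matrix.mul_assoc (Xᵀ * (X * Xᵀ)⁻¹) X (Xᵀ * (X * Xᵀ)⁻¹), XmulG X h, Matrix.mul_one]

lemma P_mul_P (h : (X * Xᵀ) * (X * Xᵀ)⁻¹ = 1) :
    (Xᵀ * (X * Xᵀ)⁻¹ * X) * (Xᵀ * (X * Xᵀ)⁻¹ * X) = Xᵀ * (X * Xᵀ)⁻¹ * X := by
  calc (Xᵀ * (X * Xᵀ)⁻¹ * X) * (Xᵀ * (X * Xᵀ)⁻¹ * X)
      = ((Xᵀ * (X * Xᵀ)⁻¹ * X) * (Xᵀ * (X * Xᵀ)⁻¹)) * X :=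
        (Matrix.mul_assoc _ _ _).symm
    _ = Xᵀ * (X * Xᵀ)⁻¹ * X := by rw [P_mul_G X h]

lemma iA_symm : ((X * Xᵀ)⁻¹)ᵀ = (X * Xᵀ)⁻¹ := by
  rw [Matrix.transpose_nonsing_inv]
  congr 1
  rw [Matrix.transpose_mul, Matrix.transpose_transpose]

lemma P_symm : (Xᵀ * (X * Xᵀ)⁻¹ * X)ᵀ = Xᵀ * (X * Xᵀ)⁻¹ * X := by
  rw [Matrix.transpose_mul, Matrix.transpose_mul, Matrix.transpose_transpose, iA_symm,
    Matrix.mul_assoc]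

lemma GT_mul_G (h : (X * Xᵀ) * (X * Xᵀ)⁻¹ = 1) :
    (Xᵀ * (X * Xᵀ)⁻¹)ᵀ * (Xᵀ * (X * Xᵀ)⁻¹) = (X * Xᵀ)⁻¹ := by
  rw [Matrix.transpose_mul, Matrix.transpose_transpose, iA_symm, Matrix.mul_assoc,
    XmulG X h, Matrix.mul_one]

lemma trace_P (h : (X * Xᵀ) * (X * Xᵀ)⁻¹ = 1) :
    (Xᵀ * (X * Xᵀ)⁻¹ * X).trace = (n : ℝ) := by
  rw [Matrix.trace_mul_comm, XmulG X h, Matrix.trace_one]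
  simp

lemma Q_sq (h : (X * Xᵀ) * (X * Xᵀ)⁻¹ = 1) :
    (Xᵀ * (X * Xᵀ)⁻¹ * X - 1)ᵀ * (Xᵀ * (X * Xᵀ)⁻¹ * X - 1)
      = 1 - Xᵀ * (X * Xᵀ)⁻¹ * X := by
  rw [Matrix.transpose_sub, Matrix.transpose_one, P_symm]
  calc (Xᵀ * (X * Xᵀ)⁻¹ * X - 1) * (Xᵀ * (X * Xᵀ)⁻¹ * X - 1)
      = (Xᵀ * (X * Xᵀ)⁻¹ * X) * (Xᵀ * (X * Xᵀ)⁻¹ * X)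
        - Xᵀ * (X * Xᵀ)⁻¹ * X - Xᵀ * (X * Xᵀ)⁻¹ * X + 1 := by noncomm_ring
    _ = 1 - Xᵀ * (X * Xᵀ)⁻¹ * X := by rw [P_mul_P X h]; abel

lemma Q_cross (h : (X * Xᵀ) * (X * Xᵀ)⁻¹ = 1) :
    (Xᵀ * (X * Xᵀ)⁻¹ * X - 1)ᵀ * (Xᵀ * (X * Xᵀ)⁻¹) = 0 := by
  rw [Matrix.transpose_sub, Matrix.transpose_one, P_symm, Matrix.sub_mul, P_mul_G X h,
    Matrix.one_mul, sub_self]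

end PtWise

lemma measurable_YYTinv_entry (n p : ℕ) (a b : Fin n) :
    Measurable fun Y : Matrix (Fin n) (Fin p) ℝ => ((Y * Yᵀ)⁻¹) a b := by
  have hent : ∀ (i : Fin n) (j : Fin p),
      Measurable fun Y : Matrix (Fin n) (Fin p) ℝ => Y i j := fun i j =>
    (measurable_pi_apply j).comp (measurable_pi_apply i)
  exact measurable_inv_entry_comp (fun Y => Y * Yᵀ)
    (measurable_matrix_mul hent (fun i j => hent j i)) a b

lemma measurable_Pmat_entry (n p : ℕ) (a b : Fin p) :
    Measurable fun Y : Matrix (Fin n) (Fin p) ℝ => (Yᵀ * (Y * Yᵀ)⁻¹ * Y) a b := by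
  have hent : ∀ (i : Fin n) (j : Fin p),
      Measurable fun Y : Matrix (Fin n) (Fin p) ℝ => Y i j := fun i j =>
    (measurable_pi_apply j).comp (measurable_pi_apply i)
  exact measurable_matrix_mul
    (measurable_matrix_mul (fun i j => hent j i) (measurable_YYTinv_entry n p)) hent a b

lemma dot_self_nonneg {m : Type*} [Fintype m] (v : m → ℝ) : 0 ≤ v ⬝ᵥ v :=
  Finset.sum_nonneg fun _ _ => mul_self_nonneg _

lemma measurable_YYTinv_trace (n p : ℕ) :
    Measurable fun Y : Matrix (Fin n) (Fin p) ℝ => ((Y * Yᵀ)⁻¹).trace := by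
  simp only [Matrix.trace, Matrix.diag]
  exact Finset.measurable_sum _ fun i _ => measurable_YYTinv_entry n p i i

/-- Corollary 4.2: the estimation risk of the ridgeless least squares estimator
`β̂ = X†(Xβ + ε)` in the overparameterized regime, under left-sphericity of the design,
general error covariance `Ω`, and the random-effects hypothesis `E[ββᵀ] = (r²/p)·I`,
equals `r²(1 - n/p) + (trace Ω / n) · E_X[trace((XXᵀ/n)⁻¹)/n]`. -/
theorem estimation_risk_ridgeless
    (n p : ℕ) (hn : 0 < n) (hp : 0 < p)
    {Ω₀ : Type*} [MeasurableSpace Ω₀] (μ : Measure Ω₀) [IsProbabilityMeasure μ]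
    (X : Ω₀ → Matrix (Fin n) (Fin p) ℝ) (hX : Measurable X)
    (ε : Ω₀ → (Fin n → ℝ)) (hε : Measurable ε)
    (β : Ω₀ → (Fin p → ℝ)) (hβ : Measurable β)
    -- mutual independence of X, ε, β
    (hindep₁ : IndepFun X (fun ω => (ε ω, β ω)) μ)
    (hindep₂ : IndepFun ε β μ)
    -- (i) left-sphericity of X
    (hsph : ∀ O : Matrix (Fin n) (Fin n) ℝ, Oᵀ * O = 1 → O * Oᵀ = 1 →
      Measure.map (fun ω => O * X ω) μ = Measure.map X μ)
    -- (ii) a.e. full row rank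
    (hinv : ∀ᵐ ω ∂μ, IsUnit (X ω * (X ω)ᵀ))
    -- (iii) errors have mean zero and covariance Ω
    (Ω : Matrix (Fin n) (Fin n) ℝ) (hΩ : Ω.PosSemidef)
    (hε2 : ∀ i j, Integrable (fun ω => ε ω i * ε ω j) μ)
    (hεmean : ∀ i, ∫ ω, ε ω i ∂μ = 0)
    (hεcov : ∀ i j, ∫ ω, ε ω i * ε ω j ∂μ = Ω i j)
    -- (iv) random-effects hypothesis on β
    (r2 : ℝ) (hβ2 : ∀ i j, Integrable (fun ω => β ω i * β ω j) μ)
    (hr2 : r2 = ∫ ω, ∑ i, (β ω i) ^ 2 ∂μ)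
    (hβcov : ∀ i j, ∫ ω, β ω i * β ω j ∂μ = (r2 / p) * (if i = j then 1 else 0))
    -- the ridgeless estimator
    (G : Ω₀ → Matrix (Fin p) (Fin n) ℝ)
    (hG : ∀ ω, G ω = (X ω)ᵀ * (X ω * (X ω)ᵀ)⁻¹)
    (βhat : Ω₀ → (Fin p → ℝ))
    (hβhat : ∀ ω, βhat ω = G ω *ᵥ (X ω *ᵥ β ω + ε ω))
    -- integrability
    (hint1 : Integrable (fun ω => ∑ i, (βhat ω i - β ω i) ^ 2) μ)
    (hint2 : Integrable (fun ω => ((X ω * (X ω)ᵀ)⁻¹).trace) μ) :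
    ∫ ω, ∑ i, (βhat ω i - β ω i) ^ 2 ∂μ
      = r2 * (1 - (n : ℝ) / p)
        + (Ω.trace / n) * ∫ ω, (((n : ℝ)⁻¹ • (X ω * (X ω)ᵀ))⁻¹).trace / n ∂μ := by
  classical
  have hnR : (n : ℝ) ≠ 0 := Nat.cast_ne_zero.mpr hn.ne'
  have hpR : (p : ℝ) ≠ 0 := Nat.cast_ne_zero.mpr hp.ne'
  -- entrywise measurability
  have hXent : ∀ a b, Measurable fun ω => X ω a b := fun a b =>
    (measurable_pi_apply b).comp ((measurable_pi_apply a).comp hX)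
  have hiAent : ∀ a b, Measurable fun ω => ((X ω * (X ω)ᵀ)⁻¹) a b := fun a b =>
    (measurable_YYTinv_entry n p a b).comp hX
  have hPent : ∀ a b, Measurable fun ω => ((X ω)ᵀ * (X ω * (X ω)ᵀ)⁻¹ * X ω) a b := fun a b =>
    (measurable_Pmat_entry n p a b).comp hX
  have hQent : ∀ a b : Fin p,
      Measurable fun ω => ((1 : Matrix (Fin p) (Fin p) ℝ)
        - (X ω)ᵀ * (X ω * (X ω)ᵀ)⁻¹ * X ω) a b := fun a b => by
    simp only [Matrix.sub_apply]
    exact measurable_const.sub (hPent a b)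
  -- the two unit equations, a.e.
  have hinv' : ∀ᵐ ω ∂μ, (X ω * (X ω)ᵀ) * (X ω * (X ω)ᵀ)⁻¹ = 1 ∧
      (X ω * (X ω)ᵀ)⁻¹ * (X ω * (X ω)ᵀ) = 1 := by
    filter_upwards [hinv] with ω hu
    have hd := (Matrix.isUnit_iff_isUnit_det _).mp hu
    exact ⟨Matrix.mul_nonsing_inv _ hd, Matrix.nonsing_inv_mul _ hd⟩
  -- the pointwise decomposition of the risk
  have hpt : ∀ᵐ ω ∂μ,
      ∑ i, (βhat ω i - β ω i) ^ 2
        = (∑ j, ∑ k, (β ω j * β ω k)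
            * ((1 - (X ω)ᵀ * (X ω * (X ω)ᵀ)⁻¹ * X ω
                : Matrix (Fin p) (Fin p) ℝ) j k))
          + ∑ j, ∑ k, (ε ω j * ε ω k) * (((X ω * (X ω)ᵀ)⁻¹) j k) := by
    filter_upwards [hinv'] with ω h1
    obtain ⟨h1, _h2⟩ := h1
    set Y := X ω with hY
    set b := β ω with hb
    set e := ε ω with he
    have hw : (fun i => βhat ω i - b i)
        = (Yᵀ * (Y * Yᵀ)⁻¹ * Y - 1) *ᵥ b + (Yᵀ * (Y * Yᵀ)⁻¹) *ᵥ e := by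
      funext i
      rw [hβhat ω, hG ω]
      simp only [Matrix.mulVec_add, Matrix.sub_mulVec, Matrix.one_mulVec,
        Matrix.mulVec_mulVec, Pi.add_apply, Pi.sub_apply, ← hY, ← hb, ← he]
      ring
    have hsum : ∑ i, (βhat ω i - b i) ^ 2
        = ((Yᵀ * (Y * Yᵀ)⁻¹ * Y - 1) *ᵥ b + (Yᵀ * (Y * Yᵀ)⁻¹) *ᵥ e)
          ⬝ᵥ ((Yᵀ * (Y * Yᵀ)⁻¹ * Y - 1) *ᵥ b + (Yᵀ * (Y * Yᵀ)⁻¹) *ᵥ e) := by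
      rw [← hw]
      simp [dotProduct, pow_two]
    rw [hsum, add_dotProduct, dotProduct_add, dotProduct_add]
    have hu1 : ((Yᵀ * (Y * Yᵀ)⁻¹ * Y - 1) *ᵥ b) ⬝ᵥ ((Yᵀ * (Y * Yᵀ)⁻¹ * Y - 1) *ᵥ b)
        = ∑ j, ∑ k, (b j * b k)
            * ((1 - Yᵀ * (Y * Yᵀ)⁻¹ * Y : Matrix (Fin p) (Fin p) ℝ) j k) := by
      rw [mulVec_dot, Matrix.mulVec_mulVec, Q_sq Y h1, dot_expand]
    have hu2 : ((Yᵀ * (Y * Yᵀ)⁻¹ * Y - 1) *ᵥ b) ⬝ᵥ ((Yᵀ * (Y * Yᵀ)⁻¹) *ᵥ e) = 0 := by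
      rw [mulVec_dot, Matrix.mulVec_mulVec, Q_cross Y h1, Matrix.zero_mulVec,
        dotProduct_zero]
    have hu3 : ((Yᵀ * (Y * Yᵀ)⁻¹) *ᵥ e) ⬝ᵥ ((Yᵀ * (Y * Yᵀ)⁻¹ * Y - 1) *ᵥ b) = 0 := by
      rw [dotProduct_comm]; exact hu2
    have hu4 : ((Yᵀ * (Y * Yᵀ)⁻¹) *ᵥ e) ⬝ᵥ ((Yᵀ * (Y * Yᵀ)⁻¹) *ᵥ e)
        = ∑ j, ∑ k, (e j * e k) * (((Y * Yᵀ)⁻¹) j k) := by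
      rw [mulVec_dot, Matrix.mulVec_mulVec, GT_mul_G Y h1, dot_expand]
    rw [hu1, hu2, hu3, hu4]
    ring
  -- independence helpers
  have hφβ : ∀ (φ : Matrix (Fin n) (Fin p) ℝ → ℝ) (j k : Fin p), Measurable φ →
      IndepFun (fun ω => β ω j * β ω k) (fun ω => φ (X ω)) μ := by
    intro φ j k hφ
    have hψ : Measurable fun z : (Fin n → ℝ) × (Fin p → ℝ) => z.2 j * z.2 k :=
      ((measurable_pi_apply j).comp measurable_snd).mul
        ((measurable_pi_apply k).comp measurable_snd)
    have := (hindep₁.comp hφ hψ).symm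
    simpa [Function.comp_def] using this
  have hφε : ∀ (φ : Matrix (Fin n) (Fin p) ℝ → ℝ) (j k : Fin n), Measurable φ →
      IndepFun (fun ω => ε ω j * ε ω k) (fun ω => φ (X ω)) μ := by
    intro φ j k hφ
    have hψ : Measurable fun z : (Fin n → ℝ) × (Fin p → ℝ) => z.1 j * z.1 k :=
      ((measurable_pi_apply j).comp measurable_fst).mul
        ((measurable_pi_apply k).comp measurable_fst)
    have := (hindep₁.comp hφ hψ).symm
    simpa [Function.comp_def] using this
  -- bound on the entries of 1 - P
  have hQbound : ∀ᵐ ω ∂μ, ∀ j k : Fin p,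
      |((1 - (X ω)ᵀ * (X ω * (X ω)ᵀ)⁻¹ * X ω : Matrix (Fin p) (Fin p) ℝ)) j k|
        ≤ (p : ℝ) := by
    filter_upwards [hinv'] with ω h
    obtain ⟨h1, _⟩ := h
    intro j k
    have habs := entry_abs_le_trace (M := (1 - (X ω)ᵀ * (X ω * (X ω)ᵀ)⁻¹ * X ω))
      (by rw [Matrix.transpose_sub, Matrix.transpose_one, P_symm])
      (by
        intro x
        rw [← Q_sq (X ω) h1, quad_tr_mul_self]
        exact dot_self_nonneg _) j k
    have htr : (1 - (X ω)ᵀ * (X ω * (X ω)ᵀ)⁻¹ * X ω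
        : Matrix (Fin p) (Fin p) ℝ).trace = (p : ℝ) - n := by
      rw [Matrix.trace_sub, Matrix.trace_one, trace_P (X ω) h1]
      simp
    rw [htr] at habs
    have : (0:ℝ) ≤ n := Nat.cast_nonneg n
    linarith
  -- integrability of the first family
  have hint_βQ : ∀ j k : Fin p, Integrable (fun ω => (β ω j * β ω k)
      * ((1 - (X ω)ᵀ * (X ω * (X ω)ᵀ)⁻¹ * X ω : Matrix (Fin p) (Fin p) ℝ) j k)) μ := by
    intro j k
    refine Integrable.mono' (((hβ2 j k).abs).mul_const (p : ℝ)) ?_ ?_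
    · exact ((((measurable_pi_apply j).comp hβ).mul
        ((measurable_pi_apply k).comp hβ)).mul (hQent j k)).aestronglyMeasurable
    · filter_upwards [hQbound] with ω hQb
      rw [Real.norm_eq_abs, abs_mul]
      exact mul_le_mul_of_nonneg_left (hQb j k) (abs_nonneg _)
  have hint_Q : ∀ j k : Fin p, Integrable (fun ω =>
      ((1 - (X ω)ᵀ * (X ω * (X ω)ᵀ)⁻¹ * X ω : Matrix (Fin p) (Fin p) ℝ)) j k) μ := by
    intro j k
    refine Integrable.mono' (integrable_const (p : ℝ)) (hQent j k).aestronglyMeasurable ?_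
    filter_upwards [hQbound] with ω h
    simpa [Real.norm_eq_abs] using h j k
  -- bound on entries of (XXᵀ)⁻¹
  have hiAbound : ∀ᵐ ω ∂μ, ∀ j k : Fin n,
      |((X ω * (X ω)ᵀ)⁻¹) j k| ≤ ((X ω * (X ω)ᵀ)⁻¹).trace := by
    filter_upwards [hinv'] with ω h
    obtain ⟨h1, _⟩ := h
    intro j k
    refine entry_abs_le_trace (iA_symm (X ω)) ?_ j k
    intro x
    rw [← GT_mul_G (X ω) h1, quad_tr_mul_self]
    exact dot_self_nonneg _
  have hint_iA : ∀ j k : Fin n, Integrable (fun ω => ((X ω * (X ω)ᵀ)⁻¹) j k) μ := by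
    intro j k
    refine hint2.mono' (hiAent j k).aestronglyMeasurable ?_
    filter_upwards [hiAbound] with ω h
    simpa [Real.norm_eq_abs] using h j k
  have hint_εiA : ∀ j k : Fin n, Integrable (fun ω =>
      (ε ω j * ε ω k) * ((X ω * (X ω)ᵀ)⁻¹) j k) μ := by
    intro j k
    have hψ : Measurable fun z : (Fin n → ℝ) × (Fin p → ℝ) => |z.1 j * z.1 k| :=
      (((measurable_pi_apply j).comp measurable_fst).mul
        ((measurable_pi_apply k).comp measurable_fst)).abs
    have hind : IndepFun (fun ω => |ε ω j * ε ω k|)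
        (fun ω => ((X ω * (X ω)ᵀ)⁻¹).trace) μ := by
      have := (hindep₁.comp (measurable_YYTinv_trace n p) hψ).symm
      simpa [Function.comp_def] using this
    have hg : Integrable (fun ω => |ε ω j * ε ω k| * ((X ω * (X ω)ᵀ)⁻¹).trace) μ := by
      have := hind.integrable_mul ((hε2 j k).abs) hint2
      simpa [Pi.mul_def] using this
    refine hg.mono' ?_ ?_
    · exact ((((measurable_pi_apply j).comp hε).mul
        ((measurable_pi_apply k).comp hε)).mul (hiAent j k)).aestronglyMeasurable
    · filter_upwards [hiAbound] with ω h
      rw [Real.norm_eq_abs, abs_mul]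
      exact mul_le_mul_of_nonneg_left (h j k) (abs_nonneg _)
  -- product formulas via independence
  have hprod_β : ∀ j k : Fin p,
      ∫ ω, (β ω j * β ω k)
          * ((1 - (X ω)ᵀ * (X ω * (X ω)ᵀ)⁻¹ * X ω : Matrix (Fin p) (Fin p) ℝ) j k) ∂μ
        = ((r2 / p) * (if j = k then 1 else 0))
          * ∫ ω, ((1 - (X ω)ᵀ * (X ω * (X ω)ᵀ)⁻¹ * X ω
              : Matrix (Fin p) (Fin p) ℝ)) j k ∂μ := by
    intro j k
    have hφ : Measurable (fun Y : Matrix (Fin n) (Fin p) ℝ =>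
        ((1 - Yᵀ * (Y * Yᵀ)⁻¹ * Y : Matrix (Fin p) (Fin p) ℝ)) j k) := by
      simp only [Matrix.sub_apply]
      exact measurable_const.sub (measurable_Pmat_entry n p j k)
    have h := (hφβ _ j k hφ).integral_mul_eq_mul_integral
      (((measurable_pi_apply j).comp hβ).mul
        ((measurable_pi_apply k).comp hβ)).aestronglyMeasurable
      (hφ.comp hX).aestronglyMeasurable
    rw [← hβcov j k]
    simpa [Pi.mul_apply] using h
  have hprod_ε : ∀ j k : Fin n,
      ∫ ω, (ε ω j * ε ω k) * ((X ω * (X ω)ᵀ)⁻¹) j k ∂μ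
        = Ω j k * ∫ ω, ((X ω * (X ω)ᵀ)⁻¹) j k ∂μ := by
    intro j k
    have h := (hφε _ j k (measurable_YYTinv_entry n p j k)).integral_mul_eq_mul_integral
      (((measurable_pi_apply j).comp hε).mul
        ((measurable_pi_apply k).comp hε)).aestronglyMeasurable
      ((measurable_YYTinv_entry n p j k).comp hX).aestronglyMeasurable
    rw [← hεcov j k]
    simpa [Pi.mul_apply] using h
  -- the mean matrix of (XXᵀ)⁻¹
  set M : Fin n → Fin n → ℝ := fun a b => ∫ ω, ((X ω * (X ω)ᵀ)⁻¹) a b ∂μ with hMdef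
  have hMapp : ∀ a b, M a b = ∫ ω, ((X ω * (X ω)ᵀ)⁻¹) a b ∂μ := fun a b => rfl
  -- orthogonal invariance of M
  have hM_inv : ∀ (O : Matrix (Fin n) (Fin n) ℝ), Oᵀ * O = 1 → O * Oᵀ = 1 →
      ∀ j k, M j k = ∑ b, ∑ a, (O j a * O k b) * M a b := by
    intro O hO1 hO2 j k
    have hOX : Measurable fun ω => O * X ω := by
      apply measurable_pi_lambda
      intro a
      apply measurable_pi_lambda
      intro b
      simp only [Matrix.mul_apply]
      exact Finset.measurable_sum _ fun c _ => measurable_const.mul (hXent c b)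
    have hφ := measurable_YYTinv_entry n p j k
    have e1 : M j k = ∫ ω, (((O * X ω) * (O * X ω)ᵀ)⁻¹) j k ∂μ := by
      rw [hMapp,
        ← integral_map hX.aemeasurable hφ.aestronglyMeasurable, ← hsph O hO1 hO2,
        integral_map hOX.aemeasurable hφ.aestronglyMeasurable]
    have e2 : ∀ ω, ((O * X ω) * (O * X ω)ᵀ)⁻¹ = O * (X ω * (X ω)ᵀ)⁻¹ * Oᵀ := by
      intro ω
      have h3 : (O * X ω) * (O * X ω)ᵀ = O * (X ω * (X ω)ᵀ) * Oᵀ := by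
        rw [Matrix.transpose_mul]
        simp only [Matrix.mul_assoc]
      rw [h3, Matrix.mul_inv_rev, Matrix.mul_inv_rev, Matrix.inv_eq_left_inv hO2,
        Matrix.inv_eq_left_inv hO1]
      exact (Matrix.mul_assoc _ _ _).symm
    have e3 : ∀ ω, (O * (X ω * (X ω)ᵀ)⁻¹ * Oᵀ) j k
        = ∑ b, ∑ a, (O j a * O k b) * ((X ω * (X ω)ᵀ)⁻¹) a b := by
      intro ω
      simp only [Matrix.mul_apply, Matrix.transpose_apply, Finset.sum_mul]
      exact Finset.sum_congr rfl fun b _ => Finset.sum_congr rfl fun a _ => by ring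
    calc M j k = ∫ ω, (((O * X ω) * (O * X ω)ᵀ)⁻¹) j k ∂μ := e1
      _ = ∫ ω, ∑ b, ∑ a, (O j a * O k b) * ((X ω * (X ω)ᵀ)⁻¹) a b ∂μ := by
          congr 1
          funext ω
          rw [e2 ω]
          exact e3 ω
      _ = ∑ b, ∑ a, (O j a * O k b) * M a b := by
          rw [integral_finset_sum _ (fun b _ => integrable_finset_sum _ fun a _ =>
            (hint_iA a b).const_mul _)]
          refine Finset.sum_congr rfl fun b _ => ?_
          rw [integral_finset_sum _ (fun a _ => (hint_iA a b).const_mul _)]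
          exact Finset.sum_congr rfl fun a _ => integral_const_mul _ _
  -- off-diagonal entries of M vanish
  have hMoff : ∀ j k : Fin n, j ≠ k → M j k = 0 := by
    intro j k hjk
    have hdiagmul : Matrix.diagonal (fun i => if i = j then (-1:ℝ) else 1)
        * Matrix.diagonal (fun i => if i = j then (-1:ℝ) else 1) = 1 := by
      rw [Matrix.diagonal_mul_diagonal]
      ext a b
      by_cases h : a = b
      · subst h
        by_cases h2 : a = j <;> simp [Matrix.diagonal_apply, Matrix.one_apply, h2]
      · simp [Matrix.diagonal_apply, Matrix.one_apply, h]
    have hO1 : (Matrix.diagonal (fun i => if i = j then (-1:ℝ) else 1))ᵀ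
        * Matrix.diagonal (fun i => if i = j then (-1:ℝ) else 1) = 1 := by
      rw [Matrix.diagonal_transpose]; exact hdiagmul
    have hO2 : Matrix.diagonal (fun i => if i = j then (-1:ℝ) else 1)
        * (Matrix.diagonal (fun i => if i = j then (-1:ℝ) else 1))ᵀ = 1 := by
      rw [Matrix.diagonal_transpose]; exact hdiagmul
    have hcollapse := hM_inv _ hO1 hO2 j k
    simp only [Matrix.diagonal_apply, ite_mul, zero_mul, mul_ite, mul_zero,
      if_pos rfl, if_neg (Ne.symm hjk)] at hcollapse
    rw [Finset.sum_eq_single k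
        (fun x _ hx => Finset.sum_eq_zero fun x1 _ => if_neg fun h => hx h.symm)
        (fun h => absurd (Finset.mem_univ k) h),
      Finset.sum_eq_single j
        (fun x1 _ hx1 => by rw [if_pos rfl, if_neg (show ¬ j = x1 from fun h => hx1 h.symm)])
        (fun h => absurd (Finset.mem_univ j) h),
      if_pos rfl, if_pos rfl] at hcollapse
    simp only [if_true, neg_mul, one_mul, neg_one_mul] at hcollapse
    linarith [hcollapse]
  -- diagonal entries of M agree
  have hMdiag : ∀ j k : Fin n, M j j = M k k := by
    intro j k
    have hswap : ∀ a c : Fin n, (a = Equiv.swap j k c) ↔ (c = Equiv.swap j k a) := by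
      intro a c
      rw [eq_comm, Equiv.swap_apply_eq_iff]
    have hO1 : (Matrix.of fun a b => if b = Equiv.swap j k a then (1:ℝ) else 0)ᵀ
        * (Matrix.of fun a b => if b = Equiv.swap j k a then (1:ℝ) else 0) = 1 := by
      ext a b
      simp only [Matrix.mul_apply, Matrix.transpose_apply, Matrix.of_apply, Matrix.one_apply]
      simp only [hswap, ite_mul, one_mul, zero_mul, Finset.sum_ite_eq', Finset.mem_univ,
        if_true, Equiv.swap_apply_self]
      simp [eq_comm]
    have hO2 : (Matrix.of fun a b => if b = Equiv.swap j k a then (1:ℝ) else 0)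
        * (Matrix.of fun a b => if b = Equiv.swap j k a then (1:ℝ) else 0)ᵀ = 1 := by
      ext a b
      simp only [Matrix.mul_apply, Matrix.transpose_apply, Matrix.of_apply, Matrix.one_apply]
      simp only [ite_mul, one_mul, zero_mul, Finset.sum_ite_eq', Finset.mem_univ, if_true]
      simp [Equiv.eq_symm_apply]
    have hkey := hM_inv _ hO1 hO2 j j
    simp only [Matrix.of_apply, ite_mul, one_mul, zero_mul, mul_ite, mul_zero,
      if_pos rfl, Equiv.swap_apply_left] at hkey
    rw [hkey,
      Finset.sum_eq_single k
        (fun x _ hx => Finset.sum_eq_zero fun x1 _ => if_neg hx)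
        (fun h => absurd (Finset.mem_univ k) h),
      Finset.sum_eq_single k
        (fun x1 _ hx1 => by rw [if_pos rfl, if_neg hx1])
        (fun h => absurd (Finset.mem_univ k) h),
      if_pos rfl, if_pos rfl]
  -- value of the noise term
  have hTnoise : ∫ ω, (∑ j, ∑ k, (ε ω j * ε ω k) * ((X ω * (X ω)ᵀ)⁻¹) j k) ∂μ
      = Ω.trace * M ⟨0, hn⟩ ⟨0, hn⟩ := by
    rw [integral_finset_sum _ (fun j _ => integrable_finset_sum _ fun k _ => hint_εiA j k)]
    calc ∑ j, ∫ ω, ∑ k, (ε ω j * ε ω k) * ((X ω * (X ω)ᵀ)⁻¹) j k ∂μ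
        = ∑ j, ∑ k, Ω j k * M j k := by
          refine Finset.sum_congr rfl fun j _ => ?_
          rw [integral_finset_sum _ (fun k _ => hint_εiA j k)]
          exact Finset.sum_congr rfl fun k _ => by rw [hprod_ε j k, hMapp]
      _ = ∑ j : Fin n, Ω j j * M ⟨0, hn⟩ ⟨0, hn⟩ := by
          refine Finset.sum_congr rfl fun j _ => ?_
          rw [Finset.sum_eq_single j
            (fun k _ hkj => by rw [hMoff j k fun h => hkj h.symm, mul_zero])
            (fun h => absurd (Finset.mem_univ j) h), hMdiag j ⟨0, hn⟩]
      _ = Ω.trace * M ⟨0, hn⟩ ⟨0, hn⟩ := by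
          rw [← Finset.sum_mul]
          congr 1
  -- value of the bias term
  have hTbias : ∫ ω, (∑ j, ∑ k, (β ω j * β ω k)
      * ((1 - (X ω)ᵀ * (X ω * (X ω)ᵀ)⁻¹ * X ω : Matrix (Fin p) (Fin p) ℝ) j k)) ∂μ
      = (r2 / p) * ((p : ℝ) - n) := by
    rw [integral_finset_sum _ (fun j _ => integrable_finset_sum _ fun k _ => hint_βQ j k)]
    have step1 : ∀ j : Fin p, ∫ ω, ∑ k, (β ω j * β ω k)
        * ((1 - (X ω)ᵀ * (X ω * (X ω)ᵀ)⁻¹ * X ω : Matrix (Fin p) (Fin p) ℝ) j k) ∂μ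
        = (r2 / p) * ∫ ω, ((1 - (X ω)ᵀ * (X ω * (X ω)ᵀ)⁻¹ * X ω
            : Matrix (Fin p) (Fin p) ℝ)) j j ∂μ := by
      intro j
      rw [integral_finset_sum _ (fun k _ => hint_βQ j k),
        Finset.sum_eq_single j
          (fun k _ hkj => by
            rw [hprod_β j k, if_neg (show ¬ j = k from fun h => hkj h.symm), mul_zero,
              zero_mul])
          (fun h => absurd (Finset.mem_univ j) h),
        hprod_β j j, if_pos rfl, mul_one]
    rw [Finset.sum_congr rfl fun j _ => step1 j, ← Finset.mul_sum]
    congr 1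
    rw [← integral_finset_sum _ (fun j _ => hint_Q j j)]
    have hae : ∀ᵐ ω ∂μ, (∑ j, ((1 - (X ω)ᵀ * (X ω * (X ω)ᵀ)⁻¹ * X ω
        : Matrix (Fin p) (Fin p) ℝ)) j j) = (p : ℝ) - n := by
      filter_upwards [hinv'] with ω h
      obtain ⟨h1, _⟩ := h
      calc ∑ j, ((1 - (X ω)ᵀ * (X ω * (X ω)ᵀ)⁻¹ * X ω : Matrix (Fin p) (Fin p) ℝ)) j j
          = (1 - (X ω)ᵀ * (X ω * (X ω)ᵀ)⁻¹ * X ω : Matrix (Fin p) (Fin p) ℝ).trace := by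
            simp [Matrix.trace, Matrix.diag]
        _ = (p : ℝ) - n := by
            rw [Matrix.trace_sub, Matrix.trace_one, trace_P (X ω) h1]
            simp
    rw [integral_congr_ae hae, integral_const]
    simp
  -- the integral appearing on the right-hand side
  have hR : ∫ ω, (((n : ℝ)⁻¹ • (X ω * (X ω)ᵀ))⁻¹).trace / n ∂μ
      = (n : ℝ) * M ⟨0, hn⟩ ⟨0, hn⟩ := by
    have hae : ∀ᵐ ω ∂μ, (((n : ℝ)⁻¹ • (X ω * (X ω)ᵀ))⁻¹).trace / n
        = ∑ j, ((X ω * (X ω)ᵀ)⁻¹) j j := by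
      filter_upwards [hinv'] with ω h
      obtain ⟨h1, _⟩ := h
      have hsm : ((n : ℝ)⁻¹ • (X ω * (X ω)ᵀ))⁻¹ = (n : ℝ) • (X ω * (X ω)ᵀ)⁻¹ := by
        refine Matrix.inv_eq_right_inv ?_
        rw [Matrix.smul_mul, Matrix.mul_smul, smul_smul, inv_mul_cancel₀ hnR, one_smul]
        exact h1
      rw [hsm, Matrix.trace_smul, smul_eq_mul, mul_comm, mul_div_assoc, div_self hnR,
        mul_one]
      simp [Matrix.trace, Matrix.diag]
    rw [integral_congr_ae hae, integral_finset_sum _ (fun j _ => hint_iA j j),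
      Finset.sum_congr rfl fun j (_ : j ∈ Finset.univ) =>
        (hMapp j j).symm.trans (hMdiag j ⟨0, hn⟩),
      Finset.sum_const, Finset.card_univ, Fintype.card_fin, nsmul_eq_mul]
  -- put everything together
  have hsplit : ∫ ω, ∑ i, (βhat ω i - β ω i) ^ 2 ∂μ
      = (r2 / p) * ((p : ℝ) - n) + Ω.trace * M ⟨0, hn⟩ ⟨0, hn⟩ := by
    rw [integral_congr_ae hpt, integral_add
      (integrable_finset_sum _ fun j _ => integrable_finset_sum _ fun k _ => hint_βQ j k)
      (integrable_finset_sum _ fun j _ => integrable_finset_sum _ fun k _ => hint_εiA j k),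
      hTbias, hTnoise]
  rw [hsplit, hR]
  field_simp
end

section
/- Let n, p be positive integers, let G be any p×n real matrix, let Σ be a p×p real positive semidefinite symmetric matrix and Ω an n×n real positive semidefinite symmetric matrix. Then there exists an n×n doubly stochastic matrix Γ (entries in [0,1], all row sums and column sums equal to 1) such that trace(G Ω Gᵀ Σ) = Σ_{i=1}^{n} Σ_{j=1}^{n} λᵢ(Gᵀ Σ G) · λⱼ(Ω) · Γᵢⱼ, where λ₁(A) ≥ … ≥ λₙ(A) denote the eigenvalues of a symmetric n×n matrix A. -/
set_option maxHeartbeats 1000000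


open Matrix


private lemma aux_trace_conj {m : Type*} [Fintype m] [DecidableEq m]
    (U D V E : Matrix m m ℝ) :
    (U * D * Uᵀ * (V * E * Vᵀ)).trace = (D * ((Uᵀ * V) * E * (Uᵀ * V)ᵀ)).trace := by
  rw [Matrix.transpose_mul, Matrix.transpose_transpose,
    show U * D * Uᵀ * (V * E * Vᵀ) = U * (D * (Uᵀ * V * (E * Vᵀ))) by
      simp only [Matrix.mul_assoc],
    Matrix.trace_mul_comm]
  simp only [Matrix.mul_assoc]

/-- Spectral decomposition of the variance term (proof of Theorem 3.2): the `Σ`-weighted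
variance `trace(G Ω Gᵀ Σ)` is a bilinear form between the eigenvalues of `Gᵀ Σ G` and the
eigenvalues of `Ω` through a doubly stochastic alignment matrix `Γ`. -/
theorem variance_bilinear_doubly_stochastic
    (n p : ℕ) (hn : 0 < n) (hp : 0 < p)
    (G : Matrix (Fin p) (Fin n) ℝ)
    (Sig : Matrix (Fin p) (Fin p) ℝ) (hSig : Sig.PosSemidef)
    (Ω : Matrix (Fin n) (Fin n) ℝ) (hΩ : Ω.PosSemidef)
    (hA : (Gᵀ * Sig * G).IsHermitian) :
    ∃ Γ : Matrix (Fin n) (Fin n) ℝ,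
      (∀ i j, 0 ≤ Γ i j ∧ Γ i j ≤ 1)
      ∧ (∀ i, ∑ j, Γ i j = 1)
      ∧ (∀ j, ∑ i, Γ i j = 1)
      ∧ (G * Ω * Gᵀ * Sig).trace
          = ∑ i, ∑ j, hA.eigenvalues i * hΩ.isHermitian.eigenvalues j * Γ i j := by
  classical
  set hB := hΩ.isHermitian with hBdef
  set U : Matrix (Fin n) (Fin n) ℝ := (hA.eigenvectorUnitary : Matrix (Fin n) (Fin n) ℝ) with hUdef
  set V : Matrix (Fin n) (Fin n) ℝ := (hB.eigenvectorUnitary : Matrix (Fin n) (Fin n) ℝ) with hVdef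
  set W : Matrix (Fin n) (Fin n) ℝ := Uᵀ * V with hWdef
  have hUstar : star U = Uᵀ := by ext i j; simp [star_apply]
  have hVstar : star V = Vᵀ := by ext i j; simp [star_apply]
  have hWmem : W ∈ Matrix.unitaryGroup (Fin n) ℝ := by
    rw [hWdef, ← hUstar]
    exact mul_mem (Unitary.star_mem hA.eigenvectorUnitary.2) hB.eigenvectorUnitary.2
  have hWWt : W * Wᵀ = 1 := by
    have := (Matrix.mem_unitaryGroup_iff.mp hWmem)
    have hst : star W = Wᵀ := by ext i j; simp [star_apply]
    rwa [hst] at this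
  have hWtW : Wᵀ * W = 1 := by
    have := (Matrix.mem_unitaryGroup_iff'.mp hWmem)
    have hst : star W = Wᵀ := by ext i j; simp [star_apply]
    rwa [hst] at this
  have hrow : ∀ i, ∑ j, (W i j)^2 = 1 := by
    intro i
    have := congrFun (congrFun hWWt i) i
    simpa [Matrix.mul_apply, Matrix.one_apply, pow_two] using this
  have hcol : ∀ j, ∑ i, (W i j)^2 = 1 := by
    intro j
    have := congrFun (congrFun hWtW j) j
    simpa [Matrix.mul_apply, Matrix.one_apply, pow_two] using this
  refine ⟨fun i j => (W i j)^2, fun i j => ⟨sq_nonneg _, ?_⟩, hrow, hcol, ?_⟩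
  · rw [← hrow i]
    exact Finset.single_le_sum (fun k _ => sq_nonneg (W i k)) (Finset.mem_univ j)
  · -- trace identity
    have hAspec : Gᵀ * Sig * G = U * diagonal hA.eigenvalues * Uᵀ := by
      have := hA.spectral_theorem
      rw [← hUstar]
      simpa [Function.comp] using this
    have hOspec : Ω = V * diagonal hB.eigenvalues * Vᵀ := by
      have := hB.spectral_theorem
      rw [← hVstar]
      simpa [Function.comp] using this
    have hUtU : Uᵀ * U = 1 := by
      have h1 : star U * U = 1 := Matrix.mem_unitaryGroup_iff'.mp hA.eigenvectorUnitary.2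
      rwa [hUstar] at h1
    have htr : (G * Ω * Gᵀ * Sig).trace = ((Gᵀ * Sig * G) * Ω).trace := by
      rw [show G * Ω * Gᵀ * Sig = G * (Ω * Gᵀ * Sig) by
            simp only [Matrix.mul_assoc],
        Matrix.trace_mul_comm,
        show Ω * Gᵀ * Sig * G = Ω * (Gᵀ * Sig * G) by
            simp only [Matrix.mul_assoc],
        Matrix.trace_mul_comm]
    have key : ((Gᵀ * Sig * G) * Ω).trace
        = (diagonal hA.eigenvalues * (W * diagonal hB.eigenvalues * Wᵀ)).trace := by
      conv_lhs => rw [hAspec, hOspec]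
      rw [aux_trace_conj, ← hWdef]
    have expand : ∀ (d e : Fin n → ℝ),
        (diagonal d * (W * diagonal e * Wᵀ)).trace = ∑ i, ∑ j, d i * e j * (W i j)^2 := by
      intro d e
      rw [Matrix.trace]
      refine Finset.sum_congr rfl fun i _ => ?_
      rw [Matrix.diag_apply, Matrix.diagonal_mul, Matrix.mul_apply, Finset.mul_sum]
      refine Finset.sum_congr rfl fun j _ => ?_
      rw [Matrix.mul_diagonal, Matrix.transpose_apply]
      ring
    rw [htr, key, expand]
end

section
/- Let 0 < c ≤ C < ∞ and let H be a probability measure on ℝ supported in [c, C], with mean μ_H := ∫ τ dH(τ). Let γ > 1 and suppose s* > 0 satisfies 1 − 1/γ = ∫ 1/(1 + τ·s*) dH(τ). Then s* ≥ 1/(μ_H·(γ−1)). -/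
/-!
The map `t ↦ 1 / (1 + t s)` is convex on `[0, ∞)`, so Jensen's inequality gives
`1 / (1 + μ_H s) ≤ ∫ 1 / (1 + τ s) dH(τ) = 1 - 1/γ`; clearing denominators yields
`1 ≤ μ_H (γ - 1) s`.
-/

open MeasureTheory Set

theorem convexOn_one_div_one_add_mul {s : ℝ} (hs : 0 ≤ s) :
    ConvexOn ℝ (Ici 0) fun t : ℝ => 1 / (1 + t * s) := by
  let g : ℝ →ᵃ[ℝ] ℝ := ((LinearMap.lsmul ℝ ℝ).flip s).toAffineMap + AffineMap.const ℝ ℝ 1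
  have hg : ∀ t, g t = 1 + t * s := fun t => by simp [g, add_comm]
  have hpos : Ici 0 ⊆ g ⁻¹' Ioi 0 := fun t (ht : 0 ≤ t) => show 0 < g t by rw [hg]; positivity
  simpa [Function.comp_def, hg] using
    ((convexOn_zpow (-1)).comp_affineMap g).subset hpos (convex_Ici 0)

theorem one_div_one_add_integral_mul_le {α : Type*} [MeasurableSpace α] {μ : Measure α}
    [IsProbabilityMeasure μ] {f : α → ℝ} (hf : Integrable f μ) (hf0 : 0 ≤ᵐ[μ] f) {s : ℝ}
    (hs : 0 ≤ s) : 1 / (1 + (∫ x, f x ∂μ) * s) ≤ ∫ x, 1 / (1 + f x * s) ∂μ := by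
  have hcont : ContinuousOn (fun t : ℝ => 1 / (1 + t * s)) (Ici 0) := by
    refine ContinuousOn.div continuousOn_const (by fun_prop) fun t (ht : 0 ≤ t) => ?_
    positivity
  have hbounded : ∀ᵐ x ∂μ, 1 / (1 + f x * s) ∈ Icc (0 : ℝ) 1 := by
    filter_upwards [hf0] with x (hx : 0 ≤ f x)
    have : 1 ≤ 1 + f x * s := by nlinarith
    exact ⟨by positivity, div_le_one_of_le₀ this (by positivity)⟩
  have hmeas : AEMeasurable (fun x => 1 / (1 + f x * s)) μ := by
    have := hf.aemeasurable; fun_prop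
  exact (convexOn_one_div_one_add_mul hs).map_integral_le hcont isClosed_Ici hf0 hf
    (Integrable.of_mem_Icc 0 1 hmeas hbounded)

theorem stieltjes_limit_jensen_bound_general
    (c C : ℝ) (hc : 0 < c)
    (H : Measure ℝ) [IsProbabilityMeasure H]
    (hsupp : ∀ᵐ τ ∂H, τ ∈ Set.Icc c C)
    (μH : ℝ) (hμH : μH = ∫ τ, τ ∂H)
    (γ : ℝ) (hγ : 1 < γ)
    (s : ℝ) (hs : 0 < s)
    (heq : 1 - 1 / γ = ∫ τ, 1 / (1 + τ * s) ∂H) :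
    1 / (μH * (γ - 1)) ≤ s := by
  have hτ : 0 ≤ᵐ[H] fun τ => τ := by
    filter_upwards [hsupp] with τ hτ using hc.le.trans hτ.1
  have hint : Integrable (fun τ => τ) H := Integrable.of_mem_Icc c C aemeasurable_id hsupp
  have hjensen : 1 / (1 + μH * s) ≤ 1 - 1 / γ := by
    rw [hμH, heq]; exact one_div_one_add_integral_mul_le hint hτ hs.le
  have hμ : 0 ≤ μH := hμH ▸ integral_nonneg_of_ae hτ
  have key : 1 ≤ μH * (γ - 1) * s := by
    rw [one_sub_div (by positivity), div_le_div_iff₀ (by positivity) (by positivity)] at hjensen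
    linarith
  have hμγ : 0 < μH * (γ - 1) := pos_of_mul_pos_left (one_pos.trans_le key) hs.le
  rwa [div_le_iff₀ hμγ, mul_comm s]

/-- The tighter lower bound (eq:tighter:lb): if `H` is a probability measure supported in
`[c, C]` with `0 < c ≤ C`, mean `μ_H = ∫ τ dH(τ)`, `γ > 1`, and `s* > 0` solves
`1 − 1/γ = ∫ 1/(1 + τ s*) dH(τ)`, then `s* ≥ 1/(μ_H (γ−1))`. -/
theorem stieltjes_limit_jensen_bound
    (c C : ℝ) (hc : 0 < c) (hcC : c ≤ C)
    (H : Measure ℝ) [IsProbabilityMeasure H]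
    (hsupp : ∀ᵐ τ ∂H, τ ∈ Set.Icc c C)
    (μH : ℝ) (hμH : μH = ∫ τ, τ ∂H)
    (γ : ℝ) (hγ : 1 < γ)
    (s : ℝ) (hs : 0 < s)
    (heq : 1 - 1 / γ = ∫ τ, 1 / (1 + τ * s) ∂H) :
    1 / (μH * (γ - 1)) ≤ s :=
  stieltjes_limit_jensen_bound_general c C hc H hsupp μH hμH γ hγ s hs heq
end
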